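/- Let ω be a nondegenerate alternating bilinear form on a 4-dimensional complex vector space V and let T : V → V be a unipotent automorphism preserving ω. Then the Jordan type of T is one of (1,1,1,1), (2,1,1), (2,2), or (4); in particular the Jordan type (3,1) does not occur. -/
import Mathlib

open Module LinearMap

/-- Stabilization: if the range of `N^(k+1)` equals that of `N^k` for a nilpotent `N`,
then the range of `N^k` is trivial. -/
lemma aux_range_pow_stab {V : Type*} [AddCommGroup V] [Module ℂ V]
    (N : Module.End ℂ V) (hnil : IsNilpotent N) (k : ℕ)
    (h : LinearMap.range (N ^ (k + 1)) = LinearMap.range (N ^ k)) :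
    LinearMap.range (N ^ k) = ⊥ := by
  have key : ∀ j, LinearMap.range (N ^ (k + j)) = LinearMap.range (N ^ k) := by
    intro j
    induction j with
    | zero => rfl
    | succ j ih =>
      have e : N ^ (k + (j + 1)) = N * N ^ (k + j) := by
        rw [← pow_succ']; ring_nf
      have e2 : N ^ (k + 1) = N * N ^ k := by rw [← pow_succ']
      calc LinearMap.range (N ^ (k + (j + 1)))
          = Submodule.map N (LinearMap.range (N ^ (k + j))) := by
            rw [e, Module.End.mul_eq_comp, LinearMap.range_comp]
        _ = Submodule.map N (LinearMap.range (N ^ k)) := by rw [ih]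
        _ = LinearMap.range (N ^ (k + 1)) := by
            rw [e2, Module.End.mul_eq_comp, LinearMap.range_comp]
        _ = LinearMap.range (N ^ k) := h
  obtain ⟨m, hm⟩ := hnil
  have := key m
  rw [pow_add, hm, mul_zero] at this
  rw [← this, LinearMap.range_zero]

lemma aux_range_pow_le {V : Type*} [AddCommGroup V] [Module ℂ V]
    (N : Module.End ℂ V) (k : ℕ) :
    LinearMap.range (N ^ (k + 1)) ≤ LinearMap.range (N ^ k) := by
  rw [pow_succ, Module.End.mul_eq_comp]
  exact LinearMap.range_comp_le_range _ _

/-- Classification of unipotent symplectic automorphisms of a 4-dimensional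
complex symplectic space: writing `N = T - 1`, the Jordan type of `T` is one of
`(1,1,1,1)`, `(2,1,1)`, `(2,2)` or `(4)`; in particular the Jordan type `(3,1)`
(characterized by `N² ≠ 0`, `N³ = 0` and `rank N = 2`) does not occur. -/
theorem unipotent_symplectic_jordan_types
    (V : Type*) [AddCommGroup V] [Module ℂ V] (hdim : Module.finrank ℂ V = 4)
    (ω : V →ₗ[ℂ] V →ₗ[ℂ] ℂ)
    (halt : ∀ x : V, ω x x = 0)
    (hnondeg : ∀ x : V, (∀ y : V, ω x y = 0) → x = 0)
    (T : Module.End ℂ V) (hbij : Function.Bijective T)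
    (huni : IsNilpotent (T - 1))
    (hpres : ∀ x y : V, ω (T x) (T y) = ω x y) :
    ((T - 1 = 0) ∨
     (Module.finrank ℂ (LinearMap.range (T - 1)) = 1 ∧ (T - 1) ^ 2 = 0) ∨
     (Module.finrank ℂ (LinearMap.range (T - 1)) = 2 ∧ (T - 1) ^ 2 = 0) ∨
     (Module.finrank ℂ (LinearMap.range (T - 1)) = 3 ∧ (T - 1) ^ 3 ≠ 0 ∧ (T - 1) ^ 4 = 0)) ∧
    ¬((T - 1) ^ 2 ≠ 0 ∧ (T - 1) ^ 3 = 0 ∧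
        Module.finrank ℂ (LinearMap.range (T - 1)) = 2) := by
  have hfd : FiniteDimensional ℂ V := FiniteDimensional.of_finrank_eq_succ (n := 3) hdim
  set N : Module.End ℂ V := T - 1 with hN
  have hT : T = 1 + N := by rw [hN]; abel
  -- N ^ 4 = 0
  have h4 : N ^ 4 = 0 := by
    have hc := huni.charpoly_eq_X_pow_finrank
    have ha := N.aeval_self_charpoly
    rw [hc, hdim] at ha
    simpa using ha
  -- skew symmetry of ω
  have hskew : ∀ x y : V, ω x y = - ω y x := by
    intro x y
    have h := halt (x + y)
    simp only [map_add, LinearMap.add_apply, halt x, halt y] at h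
    linear_combination h
  -- the key exclusion of Jordan type (3,1)
  have hexcl : ¬(N ^ 2 ≠ 0 ∧ N ^ 3 = 0 ∧
      Module.finrank ℂ (LinearMap.range N) = 2) := by
    rintro ⟨h2, h3, hr⟩
    -- range N² is one dimensional
    have hne : LinearMap.range (N ^ 2) ≠ LinearMap.range (N ^ 1) := by
      intro he
      have := aux_range_pow_stab N huni 1 he
      rw [pow_one] at this
      rw [this] at hr
      simp at hr
    have hlt : LinearMap.range (N ^ 2) < LinearMap.range (N ^ 1) :=
      lt_of_le_of_ne (aux_range_pow_le N 1) hne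
    have hle1 : Module.finrank ℂ (LinearMap.range (N ^ 2)) ≤ 1 := by
      have := Submodule.finrank_lt_finrank_of_lt hlt
      rw [pow_one] at this
      omega
    -- pick x₀ with N² x₀ ≠ 0
    obtain ⟨x₀, hx₀⟩ : ∃ x, (N ^ 2) x ≠ 0 := by
      by_contra hc
      push_neg at hc
      exact h2 (LinearMap.ext fun x => hc x)
    -- range N² = span of N² x₀
    have hsp : LinearMap.range (N ^ 2) = Submodule.span ℂ {(N ^ 2) x₀} := by
      refine (Submodule.eq_of_le_of_finrank_le ?_ ?_).symm
      · rw [Submodule.span_singleton_le_iff_mem]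
        exact LinearMap.mem_range_self _ _
      · rw [finrank_span_singleton hx₀]
        exact hle1
    -- the inverse of T
    set S : Module.End ℂ V := 1 - N + N ^ 2 - N ^ 3 with hS
    have hTS : T * S = 1 := by
      have e : T * S = 1 - N ^ 4 := by rw [hT, hS]; noncomm_ring
      rw [e, h4, sub_zero]
    have hTSapp : ∀ y : V, T (S y) = y := by
      intro y
      have : (T * S) y = (1 : Module.End ℂ V) y := by rw [hTS]
      simpa using this
    -- adjoint relation
    have hadj : ∀ x y : V, ω (T x) y = ω x (S y) := by
      intro x y
      conv_lhs => rw [← hTSapp y]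
      exact hpres x (S y)
    -- ω(N²x, y) = ω(x, N²y)
    have hN4 : N ^ 4 = 0 := h4
    have hN5 : N ^ 5 = 0 := by
      rw [show (5 : ℕ) = 4 + 1 by norm_num, pow_succ, h4, zero_mul]
    have hN6 : N ^ 6 = 0 := by
      rw [show (6 : ℕ) = 5 + 1 by norm_num, pow_succ, hN5, zero_mul]
    have hM2 : (S - 1) * (S - 1) = N ^ 2 := by
      have e : (S - 1) * (S - 1)
          = N ^ 2 - (N ^ 3 + N ^ 3) + (N ^ 4 + N ^ 4 + N ^ 4) - (N ^ 5 + N ^ 5) + N ^ 6 := by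
        rw [hS]; noncomm_ring
      rw [e, h3, hN4, hN5, hN6]
      abel
    have hadj2 : ∀ x y : V, ω ((N ^ 2) x) y = ω x ((N ^ 2) y) := by
      intro x y
      have e1 : (N ^ 2 : Module.End ℂ V) = T * T - (T + T) + 1 := by
        rw [hT]; noncomm_ring
      have e2 : (N ^ 2 : Module.End ℂ V) = S * S - (S + S) + 1 := by
        rw [← hM2]; noncomm_ring
      have lhs1 : ω ((N ^ 2) x) y
          = ω (T (T x)) y - (ω (T x) y + ω (T x) y) + ω x y := by
        rw [e1]
        simp [Module.End.mul_apply, LinearMap.sub_apply, LinearMap.add_apply,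
          Module.End.one_apply, map_sub, map_add]
      have rhs1 : ω x ((N ^ 2) y)
          = ω x (S (S y)) - (ω x (S y) + ω x (S y)) + ω x y := by
        rw [e2]
        simp [Module.End.mul_apply, LinearMap.sub_apply, LinearMap.add_apply,
          Module.End.one_apply, map_sub, map_add]
      rw [lhs1, rhs1, hadj (T x) y, hadj x (S y), hadj x y]
    -- diagonal vanishing
    have hdiag : ω ((N ^ 2) x₀) x₀ = 0 := by
      have h1 := hadj2 x₀ x₀
      have h2' := hskew x₀ ((N ^ 2) x₀)
      have h12 : ω ((N ^ 2) x₀) x₀ = - ω ((N ^ 2) x₀) x₀ := h1.trans h2'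
      linear_combination h12 / 2
    -- pick y₀ pairing nontrivially with N² x₀
    obtain ⟨y₀, hy₀⟩ : ∃ y, ω ((N ^ 2) x₀) y ≠ 0 := by
      by_contra hc
      push_neg at hc
      exact hx₀ (hnondeg _ hc)
    -- N² y₀ is a multiple of N² x₀
    have hmem : (N ^ 2) y₀ ∈ Submodule.span ℂ {(N ^ 2) x₀} := by
      rw [← hsp]; exact LinearMap.mem_range_self _ _
    obtain ⟨c, hc⟩ := Submodule.mem_span_singleton.mp hmem
    -- contradiction
    have : ω ((N ^ 2) x₀) y₀ = 0 := by
      have e := hadj2 x₀ y₀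
      rw [← hc] at e
      rw [e, map_smul]
      have : ω x₀ ((N ^ 2) x₀) = 0 := by
        rw [hskew, hdiag, neg_zero]
      simp [this]
    exact hy₀ this
  refine ⟨?_, fun h => hexcl ⟨h.1, h.2.1, h.2.2⟩⟩
  -- classification by rank
  have hr4 : Module.finrank ℂ (LinearMap.range N) ≤ 4 := hdim ▸ Submodule.finrank_le _
  obtain hr | hr | hr | hr | hr :
      Module.finrank ℂ (LinearMap.range N) = 0 ∨
      Module.finrank ℂ (LinearMap.range N) = 1 ∨
      Module.finrank ℂ (LinearMap.range N) = 2 ∨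
      Module.finrank ℂ (LinearMap.range N) = 3 ∨
      Module.finrank ℂ (LinearMap.range N) = 4 := by omega
  · left
    rw [← LinearMap.range_eq_bot]
    exact Submodule.finrank_eq_zero.mp hr
  · right; left
    refine ⟨hr, ?_⟩
    have hne : LinearMap.range (N ^ 2) ≠ LinearMap.range (N ^ 1) := by
      intro he
      have := aux_range_pow_stab N huni 1 he
      rw [pow_one] at this
      rw [this] at hr; simp at hr
    have hlt : LinearMap.range (N ^ 2) < LinearMap.range (N ^ 1) :=
      lt_of_le_of_ne (aux_range_pow_le N 1) hne
    have := Submodule.finrank_lt_finrank_of_lt hlt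
    rw [pow_one, hr] at this
    rw [← LinearMap.range_eq_bot]
    exact Submodule.finrank_eq_zero.mp (by omega)
  · right; right; left
    refine ⟨hr, ?_⟩
    by_contra h2
    by_cases h3 : N ^ 3 = 0
    · exact hexcl ⟨h2, h3, hr⟩
    · -- N³ ≠ 0 forces rank N ≥ 3
      have hne3 : LinearMap.range (N ^ 3) ≠ LinearMap.range (N ^ 2) := by
        intro he
        have := aux_range_pow_stab N huni 2 he
        have h3' : LinearMap.range (N ^ 3) = ⊥ :=
          le_bot_iff.mp (this ▸ aux_range_pow_le N 2)
        exact h3 (LinearMap.range_eq_bot.mp h3')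
      have hne2 : LinearMap.range (N ^ 2) ≠ LinearMap.range (N ^ 1) := by
        intro he
        have := aux_range_pow_stab N huni 1 he
        rw [pow_one] at this
        exact h2 (by
          rw [← LinearMap.range_eq_bot]
          exact le_bot_iff.mp (this ▸ aux_range_pow_le N 1))
      have hl3 : Module.finrank ℂ (LinearMap.range (N ^ 3))
          < Module.finrank ℂ (LinearMap.range (N ^ 2)) :=
        Submodule.finrank_lt_finrank_of_lt
          (lt_of_le_of_ne (aux_range_pow_le N 2) hne3)
      have hl2 : Module.finrank ℂ (LinearMap.range (N ^ 2))
          < Module.finrank ℂ (LinearMap.range (N ^ 1)) :=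
        Submodule.finrank_lt_finrank_of_lt
          (lt_of_le_of_ne (aux_range_pow_le N 1) hne2)
      rw [pow_one, hr] at hl2
      have hpos : 0 < Module.finrank ℂ (LinearMap.range (N ^ 3)) := by
        rcases Nat.eq_zero_or_pos (Module.finrank ℂ (LinearMap.range (N ^ 3))) with h | h
        · exact absurd (LinearMap.range_eq_bot.mp (Submodule.finrank_eq_zero.mp h)) h3
        · exact h
      omega
  · right; right; right
    refine ⟨hr, ?_, h4⟩
    intro h3
    -- rank 3 with N³ = 0 is impossible
    have hker : Module.finrank ℂ (LinearMap.ker N) = 1 := by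
      have := LinearMap.finrank_range_add_finrank_ker N
      rw [hr, hdim] at this
      omega
    -- range N² ≤ ker N
    have hsub : LinearMap.range (N ^ 2) ≤ LinearMap.ker N := by
      rintro _ ⟨y, rfl⟩
      rw [LinearMap.mem_ker]
      have : (N * N ^ 2) y = 0 := by
        rw [← pow_succ', h3]; rfl
      simpa [Module.End.mul_apply] using this
    have hle1 : Module.finrank ℂ (LinearMap.range (N ^ 2)) ≤ 1 :=
      hker ▸ Submodule.finrank_mono hsub
    -- but rank N² ≥ rank N - nullity N = 2
    set f : ↥(LinearMap.range N) →ₗ[ℂ] V := N ∘ₗ (LinearMap.range N).subtype with hf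
    have hrange : LinearMap.range f = LinearMap.range (N ^ 2) := by
      rw [hf, LinearMap.range_comp, Submodule.range_subtype,
        pow_two N, Module.End.mul_eq_comp,
        LinearMap.range_comp]
    have hkerf : Module.finrank ℂ (LinearMap.ker f) ≤ 1 := by
      have hk : LinearMap.ker f = Submodule.comap (LinearMap.range N).subtype
          (LinearMap.ker N) := by
        rw [hf, LinearMap.ker_comp]
      have e : Module.finrank ℂ (LinearMap.ker f)
          = Module.finrank ℂ ((LinearMap.range N) ⊓ (LinearMap.ker N) :
              Submodule ℂ V) := by
        rw [hk, ← Submodule.map_comap_subtype,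
          Submodule.finrank_map_subtype_eq]
      rw [e]
      exact hker ▸ Submodule.finrank_mono inf_le_right
    have hrn := LinearMap.finrank_range_add_finrank_ker f
    rw [hrange] at hrn
    have hdom : Module.finrank ℂ ↥(LinearMap.range N) = 3 := hr
    rw [hdom] at hrn
    omega
  · -- rank 4 is impossible for nilpotent N
    exfalso
    have htop : LinearMap.range N = ⊤ := by
      apply Submodule.eq_top_of_finrank_eq
      rw [hr, hdim]
    have he : LinearMap.range (N ^ 1) = LinearMap.range (N ^ 0) := by
      rw [pow_one, pow_zero, htop]
      have : LinearMap.range (1 : Module.End ℂ V) = ⊤ :=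
        LinearMap.range_eq_top.mpr fun x => ⟨x, rfl⟩
      rw [this]
    have hbot := aux_range_pow_stab N huni 0 he
    rw [pow_zero] at hbot
    have h1 : (1 : Module.End ℂ V) = 0 := LinearMap.range_eq_bot.mp hbot
    have hx : ∀ x : V, x = 0 := fun x => by
      have := LinearMap.ext_iff.mp h1 x
      simpa using this
    have : Subsingleton V := ⟨fun a b => by rw [hx a, hx b]⟩
    rw [Module.finrank_zero_of_subsingleton] at hdim
    omega
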